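/- arXiv:math/0610201 — 3 statements merged into one kernel-verified Lean document; each statement's English description precedes it below -/
import Mathlib

section
/- Let R be a von Neumann regular ring. Then for every bounded chain complex P of finitely generated projective right R-modules and every (arbitrary) chain complex Q of right R-modules, the map sending the chain-homotopy class of a chain map f : P → Q to the family (H_n(f))_n is a bijection from the set of chain-homotopy classes of chain maps P → Q onto the set of families of R-module homomorphisms (H_n(P) → H_n(Q))_n. -/
/-!
Over a von Neumann regular ring every finitely generated right ideal has a left unit. Applied to
the coordinates of an element `c` of a projective module in a dual basis, this gives a functional
`φ` with `φ c • c = c`, so `x ↦ φ x • c` projects onto `A ∙ c`; inductively every finitely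
generated submodule of a projective module is a direct summand. Hence each differential `d` of a
complex of finitely generated projective modules has a weak inverse `s`, `d s d = d`: the complex
is split.

For a split complex `P` of projectives and any complex `Q`, a family `H_n P → H_n Q` is realised
by a lift `g` of `P_n → H_n P → H_n Q` through the cycles of `Q`, where `P_n → H_n P` comes from
the retraction `1 - s d` onto the cycles; `g (1 - d s)` kills boundaries, so it is a chain map.
A chain map `u` vanishing on homology is null-homotopic via `h = u s + M (1 - d s)`, where
`d M = u (1 - s d)` is solved using projectivity of `P_n`.
-/

open CategoryTheory CategoryTheory.Limits HomologicalComplex TensorProduct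

universe u

/-- A chain complex of right `R`-modules (i.e. left `Rᵐᵒᵖ`-modules) is perfect if it is
bounded and each term is a finitely generated projective module. -/
def IsPerfect (R : Type u) [Ring R] (P : ChainComplex (ModuleCat.{u} Rᵐᵒᵖ) ℤ) : Prop :=
  (∃ a b : ℤ, ∀ n : ℤ, (n < a ∨ b < n) → IsZero (P.X n)) ∧
    ∀ n : ℤ, Module.Finite Rᵐᵒᵖ (P.X n) ∧ Module.Projective Rᵐᵒᵖ (P.X n)

/-- The map sending the chain-homotopy class of a chain map `f : P ⟶ Q` to the family
`(H_n f)_n` is a bijection onto the set of families of homomorphisms `H_n P ⟶ H_n Q`: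
it is injective on homotopy classes (maps equal on homology are homotopic) and surjective
(every family of maps on homology is realized by a chain map). -/
def HomologyFullFaithful (R : Type u) [Ring R]
    (P Q : ChainComplex (ModuleCat.{u} Rᵐᵒᵖ) ℤ) : Prop :=
  (∀ f g : P ⟶ Q, (∀ n : ℤ, homologyMap f n = homologyMap g n) → Nonempty (Homotopy f g)) ∧
    ∀ φ : ∀ n : ℤ, P.homology n ⟶ Q.homology n, ∃ f : P ⟶ Q, ∀ n : ℤ, homologyMap f n = φ n

lemma LinearMap.IsProj.sup {A M : Type*} [Ring A] [AddCommGroup M] [Module A M]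
    {N₁ N₂ : Submodule A M} {p₁ p₂ : M →ₗ[A] M}
    (h₁ : LinearMap.IsProj N₁ p₁) (h₂ : LinearMap.IsProj N₂ p₂) (h : ∀ x ∈ N₂, p₁ x = 0) :
    LinearMap.IsProj (N₁ ⊔ N₂) (p₁ + p₂ ∘ₗ (LinearMap.id - p₁)) := by
  refine ⟨fun x => Submodule.add_mem _ (Submodule.mem_sup_left (h₁.map_mem x))
    (Submodule.mem_sup_right (h₂.map_mem _)), fun x hx => ?_⟩
  obtain ⟨a, ha, b, hb, rfl⟩ := Submodule.mem_sup.1 hx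
  simp [h₁.map_id a ha, h b hb, h₂.map_id b hb]

def IsVonNeumannRegular (A : Type*) [Ring A] : Prop := ∀ x : A, ∃ y, x = x * y * x

namespace IsVonNeumannRegular

open Submodule MulOpposite

variable {A : Type*} [Ring A]

lemma op (hA : IsVonNeumannRegular A) : IsVonNeumannRegular Aᵐᵒᵖ := fun x => by
  obtain ⟨y, hy⟩ := hA x.unop
  exact ⟨MulOpposite.op y, unop_injective (by simpa [mul_assoc] using hy)⟩

lemma exists_mul_eq_self_of_fg (hA : IsVonNeumannRegular A) (I : Submodule Aᵐᵒᵖ A)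
    (hI : I.FG) : ∃ e ∈ I, ∀ x ∈ I, e * x = x := by
  induction I, hI using Submodule.fg_induction with
  | singleton x =>
    obtain ⟨y, hy⟩ := hA x
    refine ⟨x * y, mem_span_singleton.2 ⟨MulOpposite.op y, rfl⟩, fun z hz => ?_⟩
    obtain ⟨a, rfl⟩ := mem_span_singleton.1 hz
    rw [smul_eq_mul_unop, ← mul_assoc, ← hy]
  | sup N₁ N₂ _ _ ih₁ ih₂ =>
    obtain ⟨e, he, he'⟩ := ih₁
    obtain ⟨f, hf, hf'⟩ := ih₂
    -- `g` generates `N₂` modulo `N₁`, and `e + g y (1 - e)` is a left unit on `N₁` and on `g`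
    set g := f - e * f
    obtain ⟨y, hy⟩ := hA g
    have hg : g ∈ N₁ ⊔ N₂ :=
      sub_mem (mem_sup_right hf) (mem_sup_left (N₁.smul_mem (MulOpposite.op f) he))
    refine ⟨e + g * y - g * y * e, ?_, fun x hx => ?_⟩
    · have hgy : g * y ∈ N₁ ⊔ N₂ := (N₁ ⊔ N₂).smul_mem (MulOpposite.op y) hg
      exact sub_mem (add_mem (mem_sup_left he) hgy) ((N₁ ⊔ N₂).smul_mem (MulOpposite.op e) hgy)
    obtain ⟨a, ha, b, hb, rfl⟩ := mem_sup.1 hx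
    have hgb : g * b = b - e * b := by rw [sub_mul, mul_assoc, hf' b hb]
    calc (e + g * y - g * y * e) * (a + b)
        = e * a + (e * b + g * y * (g * b)) + g * y * (a - e * a) := by rw [hgb]; noncomm_ring
      _ = a + b := by rw [he' a ha, sub_self, mul_zero, add_zero, ← mul_assoc (g * y), ← hy, hgb,
          add_sub_cancel]

variable {M : Type*} [AddCommGroup M] [Module A M]

lemma exists_apply_smul_eq_self (hA : IsVonNeumannRegular A) [Module.Projective A M]
    (c : M) : ∃ φ : M →ₗ[A] A, φ c • c = c := by
  obtain ⟨s, hs⟩ := Module.projective_def'.1 ‹Module.Projective A M›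
  let I := span Aᵐᵒᵖ (s c '' (s c).support)
  obtain ⟨e, heI, he⟩ :=
    hA.exists_mul_eq_self_of_fg I (fg_span ((s c).support.finite_toSet.image _))
  have hI : I ≤ LinearMap.range (LinearMap.applyₗ' Aᵐᵒᵖ c) := span_le.2 <| by
    rintro _ ⟨m, -, rfl⟩
    exact ⟨Finsupp.lapply m ∘ₗ s, rfl⟩
  obtain ⟨φ, rfl⟩ := hI heI
  have hc : c = ∑ m ∈ (s c).support, s c m • m := by
    simpa [Finsupp.linearCombination_apply, Finsupp.sum] using (LinearMap.congr_fun hs c).symm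
  refine ⟨φ, ?_⟩
  calc φ c • c = ∑ m ∈ (s c).support, (φ c * s c m) • m := by
        nth_rewrite 2 [hc]; simp only [Finset.smul_sum, smul_smul]
    _ = ∑ m ∈ (s c).support, s c m • m := Finset.sum_congr rfl fun m hm => by
        rw [show φ c * s c m = s c m from he _ (subset_span ⟨m, hm, rfl⟩)]
    _ = c := hc.symm

lemma exists_isProj_span_singleton (hA : IsVonNeumannRegular A) [Module.Projective A M]
    (c : M) : ∃ p : M →ₗ[A] M, LinearMap.IsProj (A ∙ c) p := by
  obtain ⟨φ, hφ⟩ := hA.exists_apply_smul_eq_self c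
  refine ⟨LinearMap.toSpanSingleton A M c ∘ₗ φ,
    ⟨fun x => smul_mem _ _ (mem_span_singleton_self c), fun x hx => ?_⟩⟩
  obtain ⟨a, rfl⟩ := mem_span_singleton.1 hx
  simp [hφ]

lemma exists_isProj_of_fg (hA : IsVonNeumannRegular A) [Module.Projective A M]
    (N : Submodule A M) (hN : N.FG) : ∃ p : M →ₗ[A] M, LinearMap.IsProj N p := by
  classical
  obtain ⟨t, rfl⟩ := hN
  induction t using Finset.induction_on with
  | empty => exact ⟨0, ⟨fun _ => zero_mem _, fun x hx => by simp_all⟩⟩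
  | insert x t _ ih =>
    obtain ⟨p₁, h₁⟩ := ih
    set c := x - p₁ x
    obtain ⟨p₂, h₂⟩ := hA.exists_isProj_span_singleton c
    have hspan : Submodule.span A ↑(insert x t) = Submodule.span A ↑t ⊔ A ∙ c := by
      rw [Finset.coe_insert, span_insert, sup_comm]
      refine le_antisymm (sup_le le_sup_left (span_singleton_le_iff_mem _ _ |>.2 ?_))
        (sup_le le_sup_left (span_singleton_le_iff_mem _ _ |>.2 ?_))
      · rw [← add_sub_cancel (p₁ x) x]
        exact add_mem (mem_sup_left (h₁.map_mem x)) (mem_sup_right (mem_span_singleton_self c))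
      · exact sub_mem (mem_sup_right (mem_span_singleton_self x)) (mem_sup_left (h₁.map_mem x))
    have hc : ∀ y ∈ A ∙ c, p₁ y = 0 := fun y hy => by
      obtain ⟨a, rfl⟩ := mem_span_singleton.1 hy
      simp [c, h₁.map_id _ (h₁.map_mem x)]
    exact ⟨_, hspan ▸ h₁.sup h₂ hc⟩

variable {N : Type*} [AddCommGroup N] [Module A N]

lemma exists_comp_comp_eq_self (hA : IsVonNeumannRegular A) [Module.Finite A M]
    [Module.Projective A N] (f : M →ₗ[A] N) : ∃ g : N →ₗ[A] M, f ∘ₗ g ∘ₗ f = f := by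
  obtain ⟨p, hp⟩ := hA.exists_isProj_of_fg (LinearMap.range f)
    (LinearMap.range_eq_map f ▸ Module.Finite.fg_top.map f)
  let q : N →ₗ[A] LinearMap.range f := p.codRestrict _ hp.map_mem
  have : Module.Projective A (LinearMap.range f) :=
    Module.Projective.of_split (LinearMap.range f).subtype q
      (LinearMap.ext fun x => Subtype.ext (hp.map_id x x.2))
  obtain ⟨T, hT⟩ := Module.projective_lifting_property f.rangeRestrict LinearMap.id
    f.surjective_rangeRestrict
  refine ⟨T ∘ₗ q, LinearMap.ext fun x => ?_⟩
  have hq : q (f x) = f.rangeRestrict x := Subtype.ext (hp.map_id _ ⟨x, rfl⟩)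
  simpa [hq] using congrArg Subtype.val (LinearMap.congr_fun hT (f.rangeRestrict x))

end IsVonNeumannRegular

namespace HomologicalComplex

variable {C : Type*} [Category C] {ι : Type*} {c : ComplexShape ι}

lemma nullHomotopicMap'_eq_nullHomotopicMap [Preadditive C] {K L : HomologicalComplex C c}
    (hom : ∀ i j, K.X i ⟶ L.X j) :
    Homotopy.nullHomotopicMap' (fun i j _ => hom i j) = Homotopy.nullHomotopicMap hom := by
  ext i
  dsimp only [Homotopy.nullHomotopicMap', Homotopy.nullHomotopicMap]
  congr 1
  · by_cases h : c.Rel i (c.next i)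
    · rw [dNext_eq _ h, dNext_eq _ h, dif_pos h]
    · rw [dNext_eq_zero _ _ h, dNext_eq_zero _ _ h]
  · by_cases h : c.Rel (c.prev i) i
    · rw [prevD_eq _ h, prevD_eq _ h, dif_pos h]
    · rw [prevD_eq_zero _ _ h, prevD_eq_zero _ _ h]

lemma exists_comp_toCycles_eq [Abelian C] (Q : HomologicalComplex C c) {i j : ι}
    (hij : c.prev i = j) {X : C} [Projective X] (a : X ⟶ Q.cycles i)
    (ha : a ≫ Q.homologyπ i = 0) : ∃ b : X ⟶ Q.X j, b ≫ Q.toCycles j i = a := by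
  have hS := (ShortComplex.mk _ _ (Q.toCycles_comp_homologyπ j i)).exact_of_g_is_cokernel
    (Q.homologyIsCokernel j i hij)
  exact ⟨hS.liftFromProjective a ha, hS.liftFromProjective_comp a ha⟩

/-- Splitting maps of a complex in the sense of Weibel, Definition 1.4.1. -/
structure Splitting [Preadditive C] (K : HomologicalComplex C c) where
  s : ∀ i j, K.X i ⟶ K.X j
  d_comp_s_comp_d : ∀ i j, K.d i j ≫ s j i ≫ K.d i j = K.d i j

namespace Splitting

section Preadditive

variable [Preadditive C] {K : HomologicalComplex C c} (σ : K.Splitting)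

lemma d_comp_prevD (i j : ι) : K.d i j ≫ prevD j σ.s = K.d i j := by
  by_cases h : c.Rel i j
  · rw [prevD_eq σ.s h, σ.d_comp_s_comp_d]
  · rw [K.shape _ _ h, zero_comp]

lemma dNext_comp_d (i j : ι) : dNext i σ.s ≫ K.d i j = K.d i j := by
  by_cases h : c.Rel i j
  · rw [dNext_eq σ.s h, Category.assoc, σ.d_comp_s_comp_d]
  · rw [K.shape _ _ h, comp_zero]

lemma prevD_comp_dNext (i : ι) : prevD i σ.s ≫ dNext i σ.s = 0 := by
  simp [prevD, dNext]

end Preadditive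

variable [Abelian C] {P Q : HomologicalComplex C c}

noncomputable def cyclesRetraction (σ : P.Splitting) (i : ι) : P.X i ⟶ P.cycles i :=
  P.liftCycles (𝟙 _ - dNext i σ.s) (c.next i) rfl
    (by rw [Preadditive.sub_comp, Category.id_comp, σ.dNext_comp_d, sub_self])

@[simp]
lemma cyclesRetraction_i (σ : P.Splitting) (i : ι) :
    σ.cyclesRetraction i ≫ P.iCycles i = 𝟙 _ - dNext i σ.s :=
  P.liftCycles_i _ _ _ _

@[simp]
lemma iCycles_comp_cyclesRetraction (σ : P.Splitting) (i : ι) :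
    P.iCycles i ≫ σ.cyclesRetraction i = 𝟙 _ := by
  simp [← cancel_mono (P.iCycles i), dNext]

@[simp]
lemma d_comp_cyclesRetraction (σ : P.Splitting) (i j : ι) :
    P.d i j ≫ σ.cyclesRetraction j = P.toCycles i j := by
  simp [← cancel_mono (P.iCycles j), dNext]

lemma iCycles_comp_sub_prevD_comp_cyclesRetraction_comp_homologyπ (σ : P.Splitting) (i : ι) :
    P.iCycles i ≫ (𝟙 _ - prevD i σ.s) ≫ σ.cyclesRetraction i ≫ P.homologyπ i =
      P.homologyπ i := by
  change P.iCycles i ≫ (𝟙 _ - σ.s i _ ≫ P.d _ i) ≫ _ = _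
  rw [Preadditive.sub_comp, Category.id_comp, Preadditive.comp_sub,
    ← Category.assoc (P.iCycles i), iCycles_comp_cyclesRetraction, Category.id_comp,
    Category.assoc, ← Category.assoc (P.d _ i), d_comp_cyclesRetraction, toCycles_comp_homologyπ,
    comp_zero, comp_zero, sub_zero]

theorem exists_homologyMap_eq (σ : P.Splitting) [∀ i, Projective (P.X i)]
    (φ : ∀ i, P.homology i ⟶ Q.homology i) : ∃ f : P ⟶ Q, ∀ i, homologyMap f i = φ i := by
  let g i : P.X i ⟶ Q.cycles i :=
    Projective.factorThru (σ.cyclesRetraction i ≫ P.homologyπ i ≫ φ i) (Q.homologyπ i)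
  let f : P ⟶ Q :=
    { f := fun i => (𝟙 _ - prevD i σ.s) ≫ g i ≫ Q.iCycles i
      comm' := fun i j _ => by
        rw [Category.assoc, Category.assoc, iCycles_d, comp_zero, comp_zero, ← Category.assoc,
          Preadditive.comp_sub, Category.comp_id, σ.d_comp_prevD, sub_self, zero_comp] }
  have hf : ∀ i, cyclesMap f i = P.iCycles i ≫ (𝟙 _ - prevD i σ.s) ≫ g i := fun i => by
    simp only [← cancel_mono (Q.iCycles i), cyclesMap_i, Category.assoc]; rfl
  refine ⟨f, fun i => ?_⟩
  rw [← cancel_epi (P.homologyπ i), homologyπ_naturality, hf]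
  simpa only [Category.assoc, g, Projective.factorThru_comp] using
    congrArg (· ≫ φ i) (σ.iCycles_comp_sub_prevD_comp_cyclesRetraction_comp_homologyπ i)

lemma exists_comp_d_eq_of_homologyMap_eq_zero (σ : P.Splitting) {i j : ι} [Projective (P.X i)]
    (hij : c.prev i = j) (u : P ⟶ Q) (hu : homologyMap u i = 0) :
    ∃ M : P.X i ⟶ Q.X j, M ≫ Q.d j i = (𝟙 _ - dNext i σ.s) ≫ u.f i := by
  obtain ⟨M, hM⟩ := Q.exists_comp_toCycles_eq hij (σ.cyclesRetraction i ≫ cyclesMap u i)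
    (by rw [Category.assoc, ← homologyπ_naturality, hu, comp_zero, comp_zero])
  refine ⟨M, ?_⟩
  rw [← Q.toCycles_i, ← Category.assoc, hM, Category.assoc, cyclesMap_i, ← Category.assoc,
    cyclesRetraction_i]

theorem nonempty_homotopy_zero_of_homologyMap_eq_zero (σ : P.Splitting) [∀ i, Projective (P.X i)]
    (u : P ⟶ Q) (hu : ∀ i, homologyMap u i = 0) : Nonempty (Homotopy u 0) := by
  have hM : ∀ i j, ∃ M : P.X i ⟶ Q.X j,
      c.prev i = j → M ≫ Q.d j i = (𝟙 _ - dNext i σ.s) ≫ u.f i := fun i j => by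
    by_cases hij : c.prev i = j
    · obtain ⟨M, hM⟩ := σ.exists_comp_d_eq_of_homologyMap_eq_zero hij u (hu i)
      exact ⟨M, fun _ => hM⟩
    · exact ⟨0, fun h => absurd h hij⟩
  choose M hM using hM
  let hom i j := σ.s i j ≫ u.f j + (𝟙 _ - prevD i σ.s) ≫ M i j
  have hNext : ∀ i, dNext i hom = dNext i σ.s ≫ u.f i := fun i => by
    simp only [dNext, AddMonoidHom.mk'_apply, hom, Preadditive.comp_add, Preadditive.comp_sub,
      ← Category.assoc, Category.comp_id, σ.d_comp_prevD, sub_self, zero_comp, add_zero]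
  have hPrev : ∀ i, prevD i hom = (𝟙 _ - dNext i σ.s) ≫ u.f i := fun i => by
    change (σ.s i _ ≫ u.f _ + (𝟙 _ - prevD i σ.s) ≫ M i _) ≫ Q.d _ i = _
    rw [Preadditive.add_comp, Category.assoc, Category.assoc, u.comm, hM i _ rfl,
      ← Category.assoc (σ.s _ _)]
    change prevD i σ.s ≫ u.f i + _ = _
    rw [← Category.assoc, Preadditive.sub_comp (𝟙 _), Category.id_comp, Preadditive.comp_sub,
      Category.comp_id, σ.prevD_comp_dNext, sub_zero]
    simp only [Preadditive.sub_comp]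
    abel
  have hu : u = Homotopy.nullHomotopicMap' (fun i j _ => hom i j) := by
    rw [nullHomotopicMap'_eq_nullHomotopicMap]
    ext i
    change u.f i = dNext i hom + prevD i hom
    rw [hNext, hPrev, Preadditive.sub_comp, Category.id_comp, add_sub_cancel]
  exact ⟨(Homotopy.ofEq hu).trans (Homotopy.nullHomotopy' _)⟩

theorem nonempty_homotopy_of_homologyMap_eq (σ : P.Splitting) [∀ i, Projective (P.X i)]
    (f g : P ⟶ Q) (h : ∀ i, homologyMap f i = homologyMap g i) : Nonempty (Homotopy f g) := by
  obtain ⟨H⟩ := σ.nonempty_homotopy_zero_of_homologyMap_eq_zero (f - g) fun i => by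
    rw [homologyMap_sub, h, sub_self]
  exact ⟨Homotopy.equivSubZero.symm H⟩

end Splitting

end HomologicalComplex

lemma IsVonNeumannRegular.nonempty_splitting {A : Type*} [Ring A] (hA : IsVonNeumannRegular A)
    {ι : Type*} {c : ComplexShape ι} (P : HomologicalComplex (ModuleCat A) c)
    [∀ i, Module.Finite A (P.X i)] [∀ i, Module.Projective A (P.X i)] : Nonempty P.Splitting := by
  choose g hg using fun i j => hA.exists_comp_comp_eq_self (P.d i j).hom
  exact ⟨⟨fun i j => ModuleCat.ofHom (g j i), fun i j => ModuleCat.hom_ext (hg i j)⟩⟩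

theorem homology_full_faithful_of_vonNeumannRegular (R : Type u) [Ring R]
    (hvnr : ∀ x : R, ∃ y : R, x = x * y * x)
    (P : ChainComplex (ModuleCat.{u} Rᵐᵒᵖ) ℤ) (hP : IsPerfect R P)
    (Q : ChainComplex (ModuleCat.{u} Rᵐᵒᵖ) ℤ) :
    HomologyFullFaithful R P Q := by
  have := fun n => (hP.2 n).1
  have := fun n => (hP.2 n).2
  obtain ⟨σ⟩ := (IsVonNeumannRegular.op hvnr).nonempty_splitting P
  exact ⟨σ.nonempty_homotopy_of_homologyMap_eq, σ.exists_homologyMap_eq⟩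
end

section
/- Let R be a ring and M a right R-module. Then M is isomorphic to a homology module H_n(P) of some bounded chain complex P of finitely generated projective right R-modules if and only if there exist a finitely presented right R-module F, an injective R-module homomorphism M → F, and an injective R-module homomorphism from the quotient F/M into some projective right R-module. Moreover, in this case there is such a complex P with P_n = 0 unless n ∈ {0,1,2} and M ≅ H_1(P). -/
/-!
If `H = ker d_n / im d_{n+1}`, then `H` embeds into the finitely presented module
`F = P_n / im d_{n+1}` (the opcycles), and `d_n` induces an embedding of `F / H` into `P_{n-1}`.

Conversely, present `F` as the cokernel of `A^m → A^k` with surjection `π : A^k → F`, and embed the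
finitely generated module `F / M` into a finite free module `Q`: it embeds into a free module
because it embeds into a projective one, and being finitely generated it only meets finitely many
coordinates. The complex `A^m → A^k → Q`, whose second map is `A^k → F → F / M → Q`, has homology
`π⁻¹(M) / ker π ≅ M` in the middle.
-/

open CategoryTheory CategoryTheory.Limits HomologicalComplex TensorProduct

universe u

open ZeroObject

def EmbedsInFPWithQuotientInProjective (A : Type u) [Ring A] (M : Type*) [AddCommGroup M]
    [Module A M] : Prop :=
  ∃ F : ModuleCat.{u} A, Module.FinitePresentation A F ∧
    ∃ i : M →ₗ[A] F, Function.Injective i ∧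
      ∃ Pr : ModuleCat.{u} A, Module.Projective A Pr ∧
        ∃ j : (F ⧸ LinearMap.range i) →ₗ[A] Pr, Function.Injective j

section FiniteFree

variable {A : Type*} [Ring A] {G : Type*} [AddCommGroup G] [Module A G] [Module.Finite A G]

theorem Module.Finite.exists_injective_finsupp_finset_of_injective {α : Type*}
    (h : G →ₗ[A] α →₀ A) (hh : Function.Injective h) :
    ∃ (s : Finset α) (ι : G →ₗ[A] s →₀ A), Function.Injective ι := by
  classical
  obtain ⟨t, ht⟩ := (Module.Finite.fg_top (R := A) (M := G)).map h
  set s := t.biUnion Finsupp.support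
  have hs : ∀ x, h x ∈ Finsupp.supported A A (s : Set α) := fun x ↦ by
    have := Finsupp.span_le_supported_biUnion_support (R := A) (t : Set (α →₀ A))
    rw [ht] at this
    simpa [s] using this ⟨x, trivial, rfl⟩
  refine ⟨s, (Finsupp.supportedEquivFinsupp _).toLinearMap ∘ₗ h.codRestrict _ hs, ?_⟩
  rw [LinearMap.coe_comp]
  exact (LinearEquiv.injective _).comp fun x y hxy ↦ hh congr(Subtype.val $hxy)

theorem Module.Finite.exists_injective_finsupp_of_injective_projective {P : Type*}
    [AddCommGroup P] [Module A P] [Module.Projective A P] (j : G →ₗ[A] P)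
    (hj : Function.Injective j) :
    ∃ (s : Finset P) (ι : G →ₗ[A] s →₀ A), Function.Injective ι :=
  have ⟨σ, hσ⟩ := Module.projective_def.mp ‹_›
  exists_injective_finsupp_finset_of_injective (σ ∘ₗ j) (hσ.injective.comp hj)

end FiniteFree

namespace CategoryTheory.ShortComplex

section ToChainComplex

variable {C : Type*} [Category C] [HasZeroMorphisms C] [HasZeroObject C]

noncomputable def chainComplexX (S : ShortComplex C) : ℤ → C
  | 2 => S.X₁
  | 1 => S.X₂
  | 0 => S.X₃
  | _ => 0

noncomputable def chainComplexD (S : ShortComplex C) :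
    ∀ i j : ℤ, S.chainComplexX i ⟶ S.chainComplexX j
  | 2, 1 => S.f
  | 1, 0 => S.g
  | _, _ => 0

lemma chainComplexD_eq_zero (S : ShortComplex C) {i j : ℤ} (h₂₁ : ¬(i = 2 ∧ j = 1))
    (h₁₀ : ¬(i = 1 ∧ j = 0)) : S.chainComplexD i j = 0 := by
  rcases i with ((_ | _ | _ | i) | i) <;> rcases j with ((_ | _ | j) | j) <;>
    first | rfl | simp at h₂₁ h₁₀

/-- `S` as a chain complex concentrated in degrees `2, 1, 0`. -/
noncomputable def toChainComplex (S : ShortComplex C) : ChainComplex C ℤ where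
  X := S.chainComplexX
  d := S.chainComplexD
  shape i j h := by
    simp only [ComplexShape.down_Rel] at h
    exact S.chainComplexD_eq_zero (by omega) (by omega)
  d_comp_d' i j k hij hjk := by
    simp only [ComplexShape.down_Rel] at hij hjk
    obtain rfl | rfl | hi := (by omega : i = 2 ∨ i = 1 ∨ (i ≠ 2 ∧ i ≠ 1))
    · obtain rfl : j = 1 := by omega
      obtain rfl : k = 0 := by omega
      exact S.zero
    · rw [S.chainComplexD_eq_zero (i := j) (j := k) (by omega) (by omega), comp_zero]
    · rw [S.chainComplexD_eq_zero (by omega) (by omega), zero_comp]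

lemma isZero_toChainComplex_X (S : ShortComplex C) {n : ℤ} (h₀ : n ≠ 0) (h₁ : n ≠ 1)
    (h₂ : n ≠ 2) : IsZero (S.toChainComplex.X n) := by
  dsimp [toChainComplex, chainComplexX]
  split
  all_goals first | omega | exact isZero_zero C

lemma toChainComplex_X_cases (S : ShortComplex C) (p : C → Prop) (h₁ : p S.X₁)
    (h₂ : p S.X₂) (h₃ : p S.X₃) (h₀ : p 0) (n : ℤ) : p (S.toChainComplex.X n) := by
  dsimp [toChainComplex, chainComplexX]
  split <;> assumption

noncomputable def toChainComplexHomologyIso [CategoryWithHomology C] (S : ShortComplex C) :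
    S.toChainComplex.homology 1 ≅ S.homology :=
  S.toChainComplex.homologyIsoSc' 2 1 0 (by simp) (by simp)

end ToChainComplex

section ModuleCat

universe v

variable {A : Type u} [Ring A] (S : ShortComplex (ModuleCat.{v} A))

lemma moduleCat_range_homologyι :
    LinearMap.range S.homologyι.hom = LinearMap.ker S.fromOpcycles.hom :=
  (moduleCat_exact_iff_range_eq_ker (.mk _ _ S.homologyι_comp_fromOpcycles)).1
    (exact_of_f_is_kernel _ S.homologyIsKernel)

lemma finitePresentation_opcycles [Module.Finite A S.X₁] [Module.FinitePresentation A S.X₂] :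
    Module.FinitePresentation A S.opcycles :=
  have : Module.FinitePresentation A (S.X₂ ⧸ LinearMap.range S.f.hom) :=
    Module.finitePresentation_of_surjective _ (Submodule.mkQ_surjective _)
      (by simp only [Submodule.ker_mkQ, Submodule.fg_range])
  .of_equiv S.moduleCatOpcyclesIso.symm.toLinearEquiv

/-- The homology `ker S.g / range S.f = π⁻¹(N) / ker π` is `N`. -/
noncomputable def homologyLinearEquivOfSurjective {F : Type*} [AddCommGroup F] [Module A F]
    (π : S.X₂ →ₗ[A] F) (hπ : Function.Surjective π)
    (hker : LinearMap.ker π = LinearMap.range S.f.hom) (N : Submodule A F)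
    (hN : LinearMap.ker S.g.hom = N.comap π) : S.homology ≃ₗ[A] N :=
  let θ : LinearMap.ker S.g.hom →ₗ[A] N := π.restrict fun x hx ↦ by rwa [hN] at hx
  have hθ : Function.Surjective θ := fun y ↦
    have ⟨x, hx⟩ := hπ y
    ⟨⟨x, by rw [hN, Submodule.mem_comap, hx]; exact y.2⟩, Subtype.ext hx⟩
  have hkerθ : LinearMap.range S.moduleCatToCycles = LinearMap.ker θ := by
    ext ⟨x, hx⟩
    simp only [LinearMap.mem_range, Subtype.ext_iff, LinearMap.mem_ker, LinearMap.restrict_apply,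
      ZeroMemClass.coe_zero, θ]
    rw [← LinearMap.mem_ker, hker]
    rfl
  S.moduleCatHomologyIso.toLinearEquiv ≪≫ₗ Submodule.quotEquivOfEq _ _ hkerθ ≪≫ₗ
    θ.quotKerEquivOfSurjective hθ

end ModuleCat

end CategoryTheory.ShortComplex

section

variable {A : Type u} [Ring A] {M : Type*} [AddCommGroup M] [Module A M]

theorem EmbedsInFPWithQuotientInProjective.of_linearEquiv_homology
    (S : ShortComplex (ModuleCat.{u} A)) (h₁ : Module.Finite A S.X₁) (h₂ : Module.Finite A S.X₂)
    (h₂' : Module.Projective A S.X₂) (h₃ : Module.Projective A S.X₃) (e : M ≃ₗ[A] S.homology) :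
    EmbedsInFPWithQuotientInProjective A M := by
  have : Module.FinitePresentation A S.X₂ := Module.finitePresentation_of_projective _ _
  set i := S.homologyι.hom ∘ₗ e.toLinearMap
  have hi : Function.Injective i :=
    ((ModuleCat.mono_iff_injective S.homologyι).1 inferInstance).comp e.injective
  have hrange : LinearMap.range i = LinearMap.ker S.fromOpcycles.hom := by
    rw [LinearMap.range_comp_of_range_eq_top _ e.range, S.moduleCat_range_homologyι]
  exact ⟨S.opcycles, S.finitePresentation_opcycles, i, hi, S.X₃, ‹_›, _,
    LinearMap.ker_eq_bot.mp (Submodule.ker_liftQ_eq_bot' _ _ hrange)⟩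

theorem EmbedsInFPWithQuotientInProjective.exists_shortComplex_homology
    (h : EmbedsInFPWithQuotientInProjective A M) :
    ∃ S : ShortComplex (ModuleCat.{u} A),
      (Module.Finite A S.X₁ ∧ Module.Projective A S.X₁) ∧
      (Module.Finite A S.X₂ ∧ Module.Projective A S.X₂) ∧
      (Module.Finite A S.X₃ ∧ Module.Projective A S.X₃) ∧ Nonempty (M ≃ₗ[A] S.homology) := by
  obtain ⟨F, hF, i, hi, Pr, hPr, j, hj⟩ := h
  obtain ⟨n, m, π, g, hπ, hexact⟩ := Module.FinitePresentation.exists_fin' A F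
  obtain ⟨s, ι, hι⟩ := Module.Finite.exists_injective_finsupp_of_injective_projective j hj
  set d := ι ∘ₗ (LinearMap.range i).mkQ ∘ₗ π
  have hker : LinearMap.ker d = (LinearMap.range i).comap π := by
    rw [LinearMap.ker_comp, LinearMap.ker_eq_bot.mpr hι, Submodule.comap_bot,
      LinearMap.ker_comp, Submodule.ker_mkQ]
  have hdg : d ∘ₗ g = 0 := by
    ext x
    simp [d, hexact.apply_apply_eq_zero]
  let S := ShortComplex.moduleCatMk g d hdg
  have fg_proj (X : Type u) [AddCommGroup X] [Module A X] [Module.Finite A X]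
      [Module.Projective A X] :
      Module.Finite A (ModuleCat.of A X) ∧ Module.Projective A (ModuleCat.of A X) := ⟨‹_›, ‹_›⟩
  exact ⟨S, fg_proj _, fg_proj _, fg_proj _, ⟨LinearEquiv.ofInjective i hi ≪≫ₗ
    (S.homologyLinearEquivOfSurjective π hπ hexact.linearMap_ker_eq _ hker).symm⟩⟩

end

theorem CategoryTheory.ShortComplex.isPerfect_toChainComplex {R : Type u} [Ring R]
    (S : ShortComplex (ModuleCat.{u} Rᵐᵒᵖ))
    (h₁ : Module.Finite Rᵐᵒᵖ S.X₁ ∧ Module.Projective Rᵐᵒᵖ S.X₁)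
    (h₂ : Module.Finite Rᵐᵒᵖ S.X₂ ∧ Module.Projective Rᵐᵒᵖ S.X₂)
    (h₃ : Module.Finite Rᵐᵒᵖ S.X₃ ∧ Module.Projective Rᵐᵒᵖ S.X₃) :
    IsPerfect R S.toChainComplex :=
  ⟨⟨0, 2, fun _ hn ↦ S.isZero_toChainComplex_X (by omega) (by omega) (by omega)⟩,
    S.toChainComplex_X_cases (fun X ↦ Module.Finite Rᵐᵒᵖ X ∧ Module.Projective Rᵐᵒᵖ X)
      h₁ h₂ h₃ (have := ModuleCat.subsingleton_of_isZero (isZero_zero (ModuleCat.{u} Rᵐᵒᵖ))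
        ⟨inferInstance, inferInstance⟩)⟩

theorem homology_module_of_perfect_complex_iff (R : Type u) [Ring R]
    (M : Type u) [AddCommGroup M] [Module Rᵐᵒᵖ M] :
    ((∃ (P : ChainComplex (ModuleCat.{u} Rᵐᵒᵖ) ℤ) (n : ℤ), IsPerfect R P ∧
        Nonempty (M ≃ₗ[Rᵐᵒᵖ] P.homology n)) ↔
      ∃ F : ModuleCat.{u} Rᵐᵒᵖ, Module.FinitePresentation Rᵐᵒᵖ F ∧
        ∃ i : M →ₗ[Rᵐᵒᵖ] F, Function.Injective i ∧
          ∃ Pr : ModuleCat.{u} Rᵐᵒᵖ, Module.Projective Rᵐᵒᵖ Pr ∧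
            ∃ j : (F ⧸ LinearMap.range i) →ₗ[Rᵐᵒᵖ] Pr, Function.Injective j) ∧
    ((∃ F : ModuleCat.{u} Rᵐᵒᵖ, Module.FinitePresentation Rᵐᵒᵖ F ∧
        ∃ i : M →ₗ[Rᵐᵒᵖ] F, Function.Injective i ∧
          ∃ Pr : ModuleCat.{u} Rᵐᵒᵖ, Module.Projective Rᵐᵒᵖ Pr ∧
            ∃ j : (F ⧸ LinearMap.range i) →ₗ[Rᵐᵒᵖ] Pr, Function.Injective j) →
      ∃ P : ChainComplex (ModuleCat.{u} Rᵐᵒᵖ) ℤ, IsPerfect R P ∧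
        (∀ n : ℤ, n ≠ 0 → n ≠ 1 → n ≠ 2 → IsZero (P.X n)) ∧
        Nonempty (M ≃ₗ[Rᵐᵒᵖ] P.homology 1)) := by
  change (_ ↔ EmbedsInFPWithQuotientInProjective Rᵐᵒᵖ M) ∧
    (EmbedsInFPWithQuotientInProjective Rᵐᵒᵖ M → _)
  have concentrated (h : EmbedsInFPWithQuotientInProjective Rᵐᵒᵖ M) :
      ∃ P : ChainComplex (ModuleCat.{u} Rᵐᵒᵖ) ℤ, IsPerfect R P ∧
        (∀ n : ℤ, n ≠ 0 → n ≠ 1 → n ≠ 2 → IsZero (P.X n)) ∧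
        Nonempty (M ≃ₗ[Rᵐᵒᵖ] P.homology 1) :=
    have ⟨S, h₁, h₂, h₃, ⟨e⟩⟩ := h.exists_shortComplex_homology
    ⟨S.toChainComplex, S.isPerfect_toChainComplex h₁ h₂ h₃,
      fun _ ↦ S.isZero_toChainComplex_X, ⟨e ≪≫ₗ S.toChainComplexHomologyIso.toLinearEquiv.symm⟩⟩
  refine ⟨⟨fun ⟨P, n, hP, ⟨e⟩⟩ ↦ ?_, fun h ↦ ?_⟩, concentrated⟩
  · exact .of_linearEquiv_homology (P.sc' (n + 1) n (n - 1)) (hP.2 _).1 (hP.2 _).1 (hP.2 _).2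
      (hP.2 _).2 (e ≪≫ₗ (P.homologyIsoSc' _ _ _ (by simp) (by simp)).toLinearEquiv)
  · obtain ⟨P, hP, -, he⟩ := concentrated h
    exact ⟨P, 1, hP, he⟩
end

section
/- Let R be a ring. Every principal right ideal aR of R is flat as a right R-module if and only if for all a, b in R with ab = 0 there exists x in R such that ax = 0 and xb = b. -/
open CategoryTheory CategoryTheory.Limits HomologicalComplex TensorProduct

universe u

/-- The balancing relations inside `M ⊗[ℤ] N` for a right `R`-module `M` and a left
`R`-module `N`. -/
def balanceRel (R : Type u) [Ring R] (M : Type u) [AddCommGroup M] [Module Rᵐᵒᵖ M]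
    (N : Type u) [AddCommGroup N] [Module R N] : Submodule ℤ (M ⊗[ℤ] N) :=
  Submodule.span ℤ {z | ∃ (m : M) (r : R) (n : N),
    z = (MulOpposite.op r • m) ⊗ₜ[ℤ] n - m ⊗ₜ[ℤ] (r • n)}

/-- The tensor product `M ⊗[R] N` of a right `R`-module and a left `R`-module. -/
def RTensor (R : Type u) [Ring R] (M : Type u) [AddCommGroup M] [Module Rᵐᵒᵖ M]
    (N : Type u) [AddCommGroup N] [Module R N] : Type u :=
  (M ⊗[ℤ] N) ⧸ balanceRel R M N

noncomputable instance (R : Type u) [Ring R] (M : Type u) [AddCommGroup M] [Module Rᵐᵒᵖ M]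
    (N : Type u) [AddCommGroup N] [Module R N] : AddCommGroup (RTensor R M N) :=
  inferInstanceAs (AddCommGroup ((M ⊗[ℤ] N) ⧸ balanceRel R M N))

/-- The map `M ⊗[R] N → M ⊗[R] N'` induced by an `R`-linear map `N → N'`. -/
noncomputable def rTensorMap (R : Type u) [Ring R]
    (M : Type u) [AddCommGroup M] [Module Rᵐᵒᵖ M]
    {N N' : Type u} [AddCommGroup N] [Module R N] [AddCommGroup N'] [Module R N']
    (f : N →ₗ[R] N') : RTensor R M N →ₗ[ℤ] RTensor R M N' :=
  Submodule.mapQ (balanceRel R M N) (balanceRel R M N')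
    (TensorProduct.map LinearMap.id (f.restrictScalars ℤ)) (by
      unfold balanceRel
      refine Submodule.span_le.2 ?_
      rintro z ⟨m, r, n, rfl⟩
      rw [SetLike.mem_coe]
      refine Submodule.mem_comap.2 ?_
      refine Submodule.subset_span ⟨m, r, f n, ?_⟩
      exact (by simp [TensorProduct.map_tmul] :
        TensorProduct.map LinearMap.id (f.restrictScalars ℤ)
          ((MulOpposite.op r • m) ⊗ₜ[ℤ] n - m ⊗ₜ[ℤ] (r • n)) =
          (MulOpposite.op r • m) ⊗ₜ[ℤ] f n - m ⊗ₜ[ℤ] (r • f n)))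

/-- A right `R`-module `M` is flat if tensoring with `M` over `R` preserves injectivity
of maps of left `R`-modules. -/
def IsFlatRight (R : Type u) [Ring R] (M : Type u) [AddCommGroup M] [Module Rᵐᵒᵖ M] : Prop :=
  ∀ (N N' : Type u) [AddCommGroup N] [Module R N] [AddCommGroup N'] [Module R N']
    (f : N →ₗ[R] N'), Function.Injective f → Function.Injective (rTensorMap R M f)

/-! Let `I = {x | m x = 0}` be the right annihilator of `m`, so that `m R ≅ R ⧸ I`. Then
`m R ⊗[R] N ≅ N ⧸ I N` with every element of the form `m ⊗ n`, so `m R` is flat iff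
`I N' ∩ N = I N` for all inclusions `N ⊆ N'`. For `b ∈ I` and `R b ⊆ R` this says `b ∈ I b`,
i.e. `x b = b` for some `x ∈ I`. Conversely, since `1 - (x + x'' - x'' x) = (1 - x'') (1 - x)`,
this condition lets one find, for finitely many elements of `I N`, a common `x ∈ I` fixing them;
an element `n ∈ N` of `I N'` is thus `x n ∈ I N`. -/

open Submodule MulOpposite

namespace RTensor

variable {R : Type u} [Ring R] {M : Type u} [AddCommGroup M] [Module Rᵐᵒᵖ M]
  {N : Type u} [AddCommGroup N] [Module R N]

variable (R) in
noncomputable def tmul (z : M) (n : N) : RTensor R M N :=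
  Submodule.Quotient.mk (z ⊗ₜ[ℤ] n)

theorem tmul_add (z : M) (n n' : N) : tmul R z (n + n') = tmul R z n + tmul R z n' := by
  rw [tmul, TensorProduct.tmul_add]; rfl

theorem tmul_zero (z : M) : tmul R z (0 : N) = 0 := by
  rw [tmul, TensorProduct.tmul_zero]; rfl

theorem zero_tmul (n : N) : tmul R (0 : M) n = 0 := by
  rw [tmul, TensorProduct.zero_tmul]; rfl

theorem op_smul_tmul (r : R) (z : M) (n : N) : tmul R (op r • z) n = tmul R z (r • n) :=
  (Submodule.Quotient.eq _).2 (subset_span ⟨z, r, n, rfl⟩)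

theorem rTensorMap_tmul {N' : Type u} [AddCommGroup N'] [Module R N'] (f : N →ₗ[R] N')
    (z : M) (n : N) : rTensorMap R M f (tmul R z n) = tmul R z (f n) :=
  rfl

end RTensor

section CyclicModule

variable {R : Type u} [Ring R] {M : Type u} [AddCommGroup M] [Module Rᵐᵒᵖ M] (m : M)
  {N : Type u} [AddCommGroup N] [Module R N]

variable (R) in
/-- The subgroup `I N` of `N`, where `I = {x | m x = 0}` is the right annihilator of `m`. -/
def annSMul (N : Type u) [AddCommGroup N] [Module R N] : Submodule ℤ N :=
  span ℤ {p | ∃ (x : R) (n : N), op x • m = 0 ∧ x • n = p}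

theorem smul_mem_annSMul {x : R} (hx : op x • m = 0) (n : N) : x • n ∈ annSMul R m N :=
  subset_span ⟨x, n, hx, rfl⟩

theorem mkQ_smul_eq_of_op_smul_eq {s s' : R} (h : op s • m = op s' • m) (n : N) :
    (annSMul R m N).mkQ (s • n) = (annSMul R m N).mkQ (s' • n) := by
  rw [mkQ_apply, mkQ_apply, Submodule.Quotient.eq, ← sub_smul]
  exact smul_mem_annSMul m (by rw [MulOpposite.op_sub, sub_smul, h, sub_self]) n

variable {m}

noncomputable def spanCoeff (z : span Rᵐᵒᵖ {m}) : R :=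
  (mem_span_singleton.1 z.2).choose.unop

theorem op_spanCoeff_smul (z : span Rᵐᵒᵖ {m}) : op (spanCoeff z) • m = z := by
  simpa [spanCoeff] using (mem_span_singleton.1 z.2).choose_spec

variable (R m N) in
/-- `m s ⊗ n ↦ [s n]`; it is well defined because `s` is determined by `m s` up to `I`. -/
noncomputable def tensorToQuotAnnSMul : span Rᵐᵒᵖ {m} ⊗[ℤ] N →ₗ[ℤ] N ⧸ annSMul R m N :=
  AddMonoidHom.toIntLinearMap <| TensorProduct.liftAddHom
    { toFun := fun z => (annSMul R m N).mkQ.toAddMonoidHom.comp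
        (DistribSMul.toAddMonoidHom N (spanCoeff z))
      map_zero' := by
        ext n
        simpa using mkQ_smul_eq_of_op_smul_eq m (s' := (0 : R))
          (by rw [op_spanCoeff_smul, MulOpposite.op_zero, zero_smul]; rfl) n
      map_add' := fun z z' => by
        ext n
        simpa [add_smul] using mkQ_smul_eq_of_op_smul_eq m (s' := spanCoeff z + spanCoeff z')
          (by rw [MulOpposite.op_add, add_smul, op_spanCoeff_smul, op_spanCoeff_smul,
            op_spanCoeff_smul]; rfl) n }
    fun k z n => by rw [map_zsmul, AddMonoidHom.smul_apply, map_zsmul]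

theorem balanceRel_le_ker_tensorToQuotAnnSMul :
    balanceRel R (span Rᵐᵒᵖ {m}) N ≤ LinearMap.ker (tensorToQuotAnnSMul R m N) := by
  refine span_le.2 ?_
  rintro _ ⟨z, r, n, rfl⟩
  rw [SetLike.mem_coe, LinearMap.mem_ker, map_sub, sub_eq_zero]
  change (annSMul R m N).mkQ (spanCoeff (op r • z) • n) = (annSMul R m N).mkQ (spanCoeff z • r • n)
  rw [← mul_smul]
  refine mkQ_smul_eq_of_op_smul_eq m ?_ n
  rw [MulOpposite.op_mul, mul_smul, op_spanCoeff_smul, op_spanCoeff_smul]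
  rfl

theorem RTensor.tmul_span_singleton_eq_zero_iff (n : N) :
    RTensor.tmul R (⟨m, mem_span_singleton_self m⟩ : span Rᵐᵒᵖ {m}) n = 0 ↔
      n ∈ annSMul R m N := by
  constructor
  · intro h
    have h' := balanceRel_le_ker_tensorToQuotAnnSMul ((Submodule.Quotient.mk_eq_zero _).1 h)
    change (annSMul R m N).mkQ
      (spanCoeff (⟨m, mem_span_singleton_self m⟩ : span Rᵐᵒᵖ {m}) • n) = 0 at h'
    rwa [mkQ_smul_eq_of_op_smul_eq m (s' := (1 : R))
      (by rw [op_spanCoeff_smul, op_one, one_smul]), one_smul, mkQ_apply,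
      Submodule.Quotient.mk_eq_zero] at h'
  · intro hn
    refine (span_le (p := LinearMap.ker ((balanceRel R _ N).mkQ ∘ₗ TensorProduct.mk ℤ _ N
      (⟨m, mem_span_singleton_self m⟩ : span Rᵐᵒᵖ {m})))).2 ?_ hn
    rintro _ ⟨x, n, hx, rfl⟩
    change RTensor.tmul R _ (x • n) = 0
    rw [← RTensor.op_smul_tmul, show op x • (⟨m, _⟩ : span Rᵐᵒᵖ {m}) = 0 from Subtype.ext hx,
      RTensor.zero_tmul]

theorem RTensor.exists_eq_tmul_span_singleton (t : RTensor R (span Rᵐᵒᵖ {m}) N) :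
    ∃ n : N, t = RTensor.tmul R (⟨m, mem_span_singleton_self m⟩ : span Rᵐᵒᵖ {m}) n := by
  obtain ⟨t, rfl⟩ := Submodule.Quotient.mk_surjective _ t
  induction t using TensorProduct.induction_on with
  | zero => exact ⟨0, (RTensor.tmul_zero _).symm⟩
  | tmul z n =>
    refine ⟨spanCoeff z • n, ?_⟩
    rw [← RTensor.op_smul_tmul]
    congr
    exact (Subtype.ext (op_spanCoeff_smul z)).symm
  | add t t' ht ht' =>
    obtain ⟨n, hn⟩ := ht
    obtain ⟨n', hn'⟩ := ht'
    exact ⟨n + n', by rw [RTensor.tmul_add, ← hn, ← hn']; rfl⟩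

theorem isFlatRight_span_singleton_iff_annSMul :
    IsFlatRight R (span Rᵐᵒᵖ {m}) ↔
      ∀ (N N' : Type u) [AddCommGroup N] [Module R N] [AddCommGroup N'] [Module R N']
        (f : N →ₗ[R] N'), Function.Injective f →
          ∀ n : N, f n ∈ annSMul R m N' → n ∈ annSMul R m N := by
  refine forall_congr' fun N => forall_congr' fun N' => ?_
  refine forall₄_congr fun _ _ _ _ => forall_congr' fun f => forall_congr' fun _ => ?_
  rw [injective_iff_map_eq_zero]
  constructor
  · intro h n hfn
    rw [← RTensor.tmul_span_singleton_eq_zero_iff] at hfn ⊢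
    exact h _ hfn
  · intro h t ht
    obtain ⟨n, rfl⟩ := RTensor.exists_eq_tmul_span_singleton t
    rw [RTensor.rTensorMap_tmul, RTensor.tmul_span_singleton_eq_zero_iff] at ht
    exact (RTensor.tmul_span_singleton_eq_zero_iff n).2 (h n ht)

theorem exists_mul_eq_of_mem_annSMul_span_singleton {b : R} {p : span R {b}}
    (hp : p ∈ annSMul R m (span R {b})) : ∃ y : R, op y • m = 0 ∧ y * b = p := by
  induction hp using Submodule.span_induction with
  | mem _ hp =>
    obtain ⟨x, ⟨n, hn⟩, hx, rfl⟩ := hp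
    obtain ⟨s, rfl⟩ := mem_span_singleton.1 hn
    exact ⟨x * s, by rw [MulOpposite.op_mul, mul_smul, hx, smul_zero], mul_assoc x s b⟩
  | zero => exact ⟨0, by simp⟩
  | add p q _ _ hp hq =>
    obtain ⟨y, hy, hyb⟩ := hp
    obtain ⟨y', hy', hy'b⟩ := hq
    exact ⟨y + y', by simp [add_smul, hy, hy'], by simp [add_mul, hyb, hy'b]⟩
  | smul k p _ hp =>
    obtain ⟨y, hy, hyb⟩ := hp
    exact ⟨k • y, by rw [MulOpposite.op_smul, smul_assoc, hy, smul_zero],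
      by rw [smul_mul_assoc, hyb]; rfl⟩

theorem exists_smul_eq_self_and_smul_eq_self
    (h : ∀ b : R, op b • m = 0 → ∃ x : R, op x • m = 0 ∧ x * b = b) {p q : N} {e e' : R}
    (he : op e • m = 0) (he' : op e' • m = 0) (hp : e • p = p) (hq : e' • q = q) :
    ∃ x : R, op x • m = 0 ∧ x • p = p ∧ x • q = q := by
  obtain ⟨e'', he'', hy⟩ := h (e' - e * e') (by
    rw [MulOpposite.op_sub, MulOpposite.op_mul, sub_smul, mul_smul, he, he', smul_zero, sub_zero])
  refine ⟨e + e'' - e'' * e, ?_, ?_, ?_⟩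
  · simp [sub_smul, add_smul, mul_smul, he, he'']
  · rw [sub_smul, add_smul, mul_smul, hp, add_sub_cancel_right]
  · have hyq : (e' - e * e') • q = q - e • q := by rw [sub_smul, mul_smul, hq]
    calc (e + e'' - e'' * e) • q = e • q + e'' • (q - e • q) := by
          rw [sub_smul, add_smul, mul_smul, smul_sub, add_sub_assoc]
      _ = q := by rw [← hyq, ← mul_smul, hy, hyq, add_sub_cancel]

theorem exists_smul_eq_self_of_mem_annSMul
    (h : ∀ b : R, op b • m = 0 → ∃ x : R, op x • m = 0 ∧ x * b = b) {p : N}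
    (hp : p ∈ annSMul R m N) :
    ∃ x : R, op x • m = 0 ∧ x • p = p := by
  induction hp using Submodule.span_induction with
  | mem _ hp =>
    obtain ⟨x, n, hx, rfl⟩ := hp
    obtain ⟨e, he, hex⟩ := h x hx
    exact ⟨e, he, by rw [← mul_smul, hex]⟩
  | zero => exact ⟨0, by simp⟩
  | add p q _ _ hp hq =>
    obtain ⟨e, he, hep⟩ := hp
    obtain ⟨e', he', heq⟩ := hq
    obtain ⟨x, hx, hxp, hxq⟩ := exists_smul_eq_self_and_smul_eq_self h he he' hep heq
    exact ⟨x, hx, by rw [smul_add, hxp, hxq]⟩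
  | smul k p _ hp =>
    obtain ⟨x, hx, hxp⟩ := hp
    exact ⟨x, hx, by rw [smul_comm, hxp]⟩

theorem isFlatRight_span_singleton_iff :
    IsFlatRight R (span Rᵐᵒᵖ {m}) ↔
      ∀ b : R, op b • m = 0 → ∃ x : R, op x • m = 0 ∧ x * b = b := by
  rw [isFlatRight_span_singleton_iff_annSMul]
  constructor
  · intro hflat b hb
    have hbR : b ∈ annSMul R m R := by simpa using smul_mem_annSMul m hb (1 : R)
    exact exists_mul_eq_of_mem_annSMul_span_singleton
      (hflat _ _ (span R {b}).subtype (injective_subtype _) ⟨b, mem_span_singleton_self b⟩ hbR)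
  · intro h N N' _ _ _ _ f hf n hfn
    obtain ⟨x, hx, hxfn⟩ := exists_smul_eq_self_of_mem_annSMul h hfn
    have hxn : x • n = n := hf (by rw [map_smul, hxfn])
    exact hxn ▸ smul_mem_annSMul m hx n

end CyclicModule

theorem principal_right_ideals_flat_iff (R : Type u) [Ring R] :
    (∀ a : R, IsFlatRight R ↥(Submodule.span Rᵐᵒᵖ ({a} : Set R))) ↔
      ∀ a b : R, a * b = 0 → ∃ x : R, a * x = 0 ∧ x * b = b :=
  forall_congr' fun _ => isFlatRight_span_singleton_iff
end
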